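/- arXiv:2403.06511 — 5 statements merged into one kernel-verified Lean document; each statement's English description precedes it below -/
import Mathlib

section
/- Let n ≥ 5 be an integer and let v : ℝ → ℝ be a four-times continuously differentiable positive function solving the Delaunay ODE. Then the Hamiltonian energy H(v)(t) = −v′(t)·v‴(t) + (1/2)·v″(t)² + ((n(n−4)+8)/4)·v′(t)² − (n²(n−4)²/32)·v(t)² + ((n−4)²(n²−4)/32)·v(t)^(2n/(n−4)) is constant in t, i.e. H(v)(t) = H(v)(0) for all t ∈ ℝ. -/
/-! Differentiating `H(v)` along `v` gives `−v′` times the left-hand side of the Delaunay ODE: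
the coefficient of `v^(2n/(n−4))` in `H` times the exponent `2n/(n−4)` is the coefficient
`n(n−4)(n²−4)/16` of the nonlinearity, and `2n/(n−4) − 1 = (n+4)/(n−4)`. -/

open Real

/-- The Delaunay ODE for an integer `n ≥ 5`:
`v⁗ − ((n(n−4)+8)/2)·v″ + (n²(n−4)²/16)·v − (n(n−4)(n²−4)/16)·v^((n+4)/(n−4)) = 0`,
where the power is a real power. -/
def DelaunayODE (n : ℕ) (v : ℝ → ℝ) : Prop :=
  ∀ t : ℝ,
    iteratedDeriv 4 v t - (((n : ℝ) * ((n : ℝ) - 4) + 8) / 2) * iteratedDeriv 2 v t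
      + ((n : ℝ) ^ 2 * ((n : ℝ) - 4) ^ 2 / 16) * v t
      - ((n : ℝ) * ((n : ℝ) - 4) * ((n : ℝ) ^ 2 - 4) / 16)
          * (v t) ^ (((n : ℝ) + 4) / ((n : ℝ) - 4)) = 0

/-- The Hamiltonian energy of a function `v : ℝ → ℝ` for the Delaunay ODE. -/
noncomputable def hamiltonian (n : ℕ) (v : ℝ → ℝ) (t : ℝ) : ℝ :=
  -(deriv v t) * iteratedDeriv 3 v t + (1 / 2) * (iteratedDeriv 2 v t) ^ 2
    + (((n : ℝ) * ((n : ℝ) - 4) + 8) / 4) * (deriv v t) ^ 2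
    - ((n : ℝ) ^ 2 * ((n : ℝ) - 4) ^ 2 / 32) * (v t) ^ 2
    + (((n : ℝ) - 4) ^ 2 * ((n : ℝ) ^ 2 - 4) / 32)
        * (v t) ^ ((2 * (n : ℝ)) / ((n : ℝ) - 4))

theorem ContDiff.hasDerivAt_iteratedDeriv {𝕜 F : Type*} [NontriviallyNormedField 𝕜]
    [NormedAddCommGroup F] [NormedSpace 𝕜 F] {f : 𝕜 → F} {N : WithTop ℕ∞} {k : ℕ}
    (hf : ContDiff 𝕜 N f) (hk : (k : WithTop ℕ∞) < N) (x : 𝕜) :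
    HasDerivAt (iteratedDeriv k f) (iteratedDeriv (k + 1) f x) x := by
  rw [iteratedDeriv_succ]
  exact (hf.differentiable_iteratedDeriv k hk x).hasDerivAt

noncomputable def fourthOrderEnergy (a b d p : ℝ) (v : ℝ → ℝ) (t : ℝ) : ℝ :=
  -(deriv v t) * iteratedDeriv 3 v t + (1 / 2) * (iteratedDeriv 2 v t) ^ 2
    + (a / 2) * (deriv v t) ^ 2 - (b / 2) * (v t) ^ 2 + d * (v t) ^ p

section

variable {a b d p : ℝ} {v : ℝ → ℝ}

theorem hasDerivAt_fourthOrderEnergy (hv : ContDiff ℝ 4 v) {x : ℝ} (hx : v x ≠ 0) :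
    HasDerivAt (fourthOrderEnergy a b d p v)
      (-(deriv v x) * (iteratedDeriv 4 v x - a * iteratedDeriv 2 v x + b * v x
        - d * p * (v x) ^ (p - 1))) x := by
  have hD : ∀ k : ℕ, k < 4 → HasDerivAt (iteratedDeriv k v) (iteratedDeriv (k + 1) v x) x :=
    fun k hk => hv.hasDerivAt_iteratedDeriv (mod_cast hk) x
  have h0 : HasDerivAt v (deriv v x) x := by simpa using hD 0 (by norm_num)
  have h1 : HasDerivAt (deriv v) (iteratedDeriv 2 v x) x := by
    simpa [iteratedDeriv_one] using hD 1 (by norm_num)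
  have h2 := hD 2 (by norm_num)
  have h3 := hD 3 (by norm_num)
  have hpow : HasDerivAt (fun y => v y ^ p) (deriv v x * p * v x ^ (p - 1)) x :=
    h0.rpow_const (Or.inl hx)
  have hsum := ((((h1.mul h3).neg.add ((h2.pow 2).const_mul (1 / 2))).add
    ((h1.pow 2).const_mul (a / 2))).sub ((h0.pow 2).const_mul (b / 2))).add (hpow.const_mul d)
  refine (hsum.congr_of_eventuallyEq (.of_forall fun t => ?_)).congr_deriv ?_
  · simp only [fourthOrderEnergy, Pi.add_apply, Pi.sub_apply, Pi.neg_apply, Pi.mul_apply,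
      Pi.pow_apply]
    ring
  · norm_num
    ring

theorem fourthOrderEnergy_eq_of_ode (hv : ContDiff ℝ 4 v) (hv0 : ∀ t, v t ≠ 0)
    (hode : ∀ t, iteratedDeriv 4 v t - a * iteratedDeriv 2 v t + b * v t
      - d * p * (v t) ^ (p - 1) = 0) (s t : ℝ) :
    fourthOrderEnergy a b d p v s = fourthOrderEnergy a b d p v t := by
  have hE : ∀ x, HasDerivAt (fourthOrderEnergy a b d p v) 0 x := fun x => by
    simpa [hode x] using
      hasDerivAt_fourthOrderEnergy (a := a) (b := b) (d := d) (p := p) hv (hv0 x)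
  exact is_const_of_deriv_eq_zero (fun x => (hE x).differentiableAt) (fun x => (hE x).deriv) s t

end

theorem hamiltonian_eq_fourthOrderEnergy (n : ℕ) :
    hamiltonian n = fourthOrderEnergy (((n : ℝ) * ((n : ℝ) - 4) + 8) / 2)
      ((n : ℝ) ^ 2 * ((n : ℝ) - 4) ^ 2 / 16) (((n : ℝ) - 4) ^ 2 * ((n : ℝ) ^ 2 - 4) / 32)
      ((2 * (n : ℝ)) / ((n : ℝ) - 4)) := by
  ext v t
  simp only [hamiltonian, fourthOrderEnergy]
  ring

theorem delaunay_nonlinearity {n : ℝ} (hn : n - 4 ≠ 0) (x : ℝ) :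
    (n - 4) ^ 2 * (n ^ 2 - 4) / 32 * (2 * n / (n - 4)) * x ^ (2 * n / (n - 4) - 1)
      = n * (n - 4) * (n ^ 2 - 4) / 16 * x ^ ((n + 4) / (n - 4)) := by
  have hexp : 2 * n / (n - 4) - 1 = (n + 4) / (n - 4) := by
    field_simp
    ring
  rw [hexp]
  congr 1
  field_simp
  ring

theorem hamiltonian_const (n : ℕ) (hn : 5 ≤ n) (v : ℝ → ℝ)
    (hv : ContDiff ℝ 4 v) (hpos : ∀ t : ℝ, 0 < v t)
    (hode : DelaunayODE n v) (t : ℝ) :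
    hamiltonian n v t = hamiltonian n v 0 := by
  have hn4 : (n : ℝ) - 4 ≠ 0 := by
    have : (5 : ℝ) ≤ n := mod_cast hn
    linarith
  rw [hamiltonian_eq_fourthOrderEnergy]
  refine fourthOrderEnergy_eq_of_ode hv (fun s => (hpos s).ne') (fun s => ?_) t 0
  rw [delaunay_nonlinearity hn4]
  exact hode s
end

section
/- Let n ≥ 5 be an integer and T ∈ ℝ. Then the function v(t) = (cosh(t+T))^((4−n)/2) is positive and solves the Delaunay ODE: v⁗(t) − ((n(n−4)+8)/2)·v″(t) + (n²(n−4)²/16)·v(t) − (n(n−4)(n²−4)/16)·v(t)^((n+4)/(n−4)) = 0 for all t ∈ ℝ. -/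
/-! With `a = (4 - n) / 2`, the identity `sinh² = cosh² - 1` gives
`(cosh ^ a)'' = a² cosh ^ a - a (a - 1) cosh ^ (a - 2)`, so applying it twice writes `v''''` and `v''`
in terms of `cosh ^ a`, `cosh ^ (a - 2)`, `cosh ^ (a - 4)`; the nonlinearity is
`v ^ ((n + 4) / (n - 4)) = cosh ^ (a - 4)`, and the coefficients of the three powers cancel.
The ODE is autonomous, so the shift by `T` is free. -/

open Real

namespace Real

lemma contDiff_cosh_rpow (a : ℝ) {k : WithTop ℕ∞} : ContDiff ℝ k fun t => cosh t ^ a :=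
  contDiff_cosh.rpow_const_of_ne fun t => (cosh_pos t).ne'

lemma hasDerivAt_cosh_rpow (a t : ℝ) :
    HasDerivAt (fun t => cosh t ^ a) (a * cosh t ^ (a - 1) * sinh t) t := by
  convert (hasDerivAt_cosh t).rpow_const (p := a) (Or.inl (cosh_pos t).ne') using 1
  ring

lemma iteratedDeriv_two_cosh_rpow (a : ℝ) :
    iteratedDeriv 2 (fun t => cosh t ^ a) =
      fun t => a ^ 2 * cosh t ^ a - a * (a - 1) * cosh t ^ (a - 2) := by
  funext t
  have hderiv : deriv (fun t => cosh t ^ a) = fun t => a * cosh t ^ (a - 1) * sinh t :=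
    funext fun t => (hasDerivAt_cosh_rpow a t).deriv
  have hderiv2 : HasDerivAt (fun t => a * cosh t ^ (a - 1) * sinh t)
      (a * ((a - 1) * cosh t ^ (a - 1 - 1) * sinh t) * sinh t + a * cosh t ^ (a - 1) * cosh t) t :=
    ((hasDerivAt_cosh_rpow (a - 1) t).const_mul a).mul (hasDerivAt_sinh t)
  rw [iteratedDeriv_succ, iteratedDeriv_one, hderiv, hderiv2.deriv]
  have hc := cosh_pos t
  have h1 : cosh t ^ (a - 1) = cosh t ^ (a - 2) * cosh t := by
    rw [← rpow_add_one hc.ne']; ring_nf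
  have h0 : cosh t ^ a = cosh t ^ (a - 2) * cosh t ^ 2 := by
    rw [← rpow_natCast, ← rpow_add hc]; norm_num
  rw [show a - 1 - 1 = a - 2 by ring, h1, h0]
  linear_combination (a * (a - 1) * cosh t ^ (a - 2)) * sinh_sq t

lemma iteratedDeriv_four_cosh_rpow (a : ℝ) :
    iteratedDeriv 4 (fun t => cosh t ^ a) =
      fun t => a ^ 4 * cosh t ^ a - a * (a - 1) * (a ^ 2 + (a - 2) ^ 2) * cosh t ^ (a - 2)
        + a * (a - 1) * (a - 2) * (a - 3) * cosh t ^ (a - 4) := by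
  funext t
  rw [iteratedDeriv_eq_iterate, show 4 = 2 + 2 from rfl, Function.iterate_add_apply,
    ← iteratedDeriv_eq_iterate, ← iteratedDeriv_eq_iterate, iteratedDeriv_two_cosh_rpow,
    iteratedDeriv_fun_sub (contDiff_const.mul (contDiff_cosh_rpow a)).contDiffAt
      (contDiff_const.mul (contDiff_cosh_rpow _)).contDiffAt,
    iteratedDeriv_const_mul_field, iteratedDeriv_const_mul_field,
    iteratedDeriv_two_cosh_rpow, iteratedDeriv_two_cosh_rpow, show a - 2 - 2 = a - 4 by ring]
  ring

end Real

/-- The factor `m - 4` kills the junk exponent `(m + 4) / 0 = 0` at `m = 4`. -/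
lemma sub_four_mul_rpow_rpow (m : ℝ) {x : ℝ} (hx : 0 ≤ x) :
    (m - 4) * (x ^ ((4 - m) / 2)) ^ ((m + 4) / (m - 4)) = (m - 4) * x ^ ((4 - m) / 2 - 4) := by
  rcases eq_or_ne m 4 with rfl | hm
  · simp
  rw [← rpow_mul hx]
  congr 2
  field_simp [sub_ne_zero.mpr hm]
  ring

lemma DelaunayODE.comp_add_const {n : ℕ} {v : ℝ → ℝ} (hv : DelaunayODE n v) (T : ℝ) :
    DelaunayODE n fun t => v (t + T) := by
  intro t
  simpa only [iteratedDeriv_comp_add_const] using hv (t + T)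

lemma delaunayODE_cosh_rpow (n : ℕ) : DelaunayODE n fun t => cosh t ^ ((4 - (n : ℝ)) / 2) := by
  intro t
  rw [iteratedDeriv_four_cosh_rpow, iteratedDeriv_two_cosh_rpow]
  linear_combination (-(n : ℝ) * ((n : ℝ) ^ 2 - 4) / 16) * sub_four_mul_rpow_rpow n (cosh_pos t).le

theorem cosh_solution_delaunay_general (n : ℕ) (T : ℝ) :
    (∀ t : ℝ, 0 < (Real.cosh (t + T)) ^ ((4 - (n : ℝ)) / 2)) ∧
      DelaunayODE n (fun t => (Real.cosh (t + T)) ^ ((4 - (n : ℝ)) / 2)) :=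
  ⟨fun _ => rpow_pos_of_pos (cosh_pos _) _, (delaunayODE_cosh_rpow n).comp_add_const T⟩

theorem cosh_solution_delaunay (n : ℕ) (hn : 5 ≤ n) (T : ℝ) :
    (∀ t : ℝ, 0 < (Real.cosh (t + T)) ^ ((4 - (n : ℝ)) / 2)) ∧
      DelaunayODE n (fun t => (Real.cosh (t + T)) ^ ((4 - (n : ℝ)) / 2)) :=
  cosh_solution_delaunay_general n T
end

section
/- Let n ≥ 5 be an integer, let I ⊆ (0,∞) be an open set, and let V : ℝ × ℝ → ℝ be a smooth (infinitely differentiable) function, positive on I × ℝ, such that for every ε ∈ I: (i) t ↦ V(ε,t) solves the Delaunay ODE, (ii) V(ε,0) = ε, (iii) ∂V/∂t(ε,0) = 0, and (iv) ∂³V/∂t³(ε,0) = 0. Define H(ε) = (1/2)·(∂²V/∂t²(ε,0))² − (n²(n−4)²/32)·ε² + ((n−4)²(n²−4)/32)·ε^(2n/(n−4)). Then for every ε ∈ I, the Wronskian-type expression A of the pair w₁ = ∂V/∂t(ε,·), w₂ = ∂V/∂ε(ε,·), evaluated at t = 0, equals minus the derivative of H: A(0) = −H′(ε). -/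
open Real

noncomputable def Dt (f : ℝ × ℝ → ℝ) : ℝ × ℝ → ℝ := fun p => fderiv ℝ f p (0, 1)
noncomputable def De (f : ℝ × ℝ → ℝ) : ℝ × ℝ → ℝ := fun p => fderiv ℝ f p (1, 0)

lemma contDiff_Dt {f : ℝ × ℝ → ℝ} (hf : ContDiff ℝ (⊤ : ℕ∞) f) : ContDiff ℝ (⊤ : ℕ∞) (Dt f) :=
  (hf.fderiv_right (m := (⊤ : ℕ∞)) (by simp)).clm_apply contDiff_const

lemma contDiff_De {f : ℝ × ℝ → ℝ} (hf : ContDiff ℝ (⊤ : ℕ∞) f) : ContDiff ℝ (⊤ : ℕ∞) (De f) :=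
  (hf.fderiv_right (m := (⊤ : ℕ∞)) (by simp)).clm_apply contDiff_const

lemma hasDerivAt_slice_t {f : ℝ × ℝ → ℝ} (hf : ContDiff ℝ (⊤ : ℕ∞) f) (ε t : ℝ) :
    HasDerivAt (fun s => f (ε, s)) (Dt f (ε, t)) t := by
  have h1 : HasDerivAt (fun s : ℝ => ((ε, s) : ℝ × ℝ)) ((0 : ℝ), (1 : ℝ)) t :=
    (hasDerivAt_const t ε).prodMk (hasDerivAt_id t)
  exact ((hf.differentiable (by simp) (ε, t)).hasFDerivAt).comp_hasDerivAt t h1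

lemma hasDerivAt_slice_e {f : ℝ × ℝ → ℝ} (hf : ContDiff ℝ (⊤ : ℕ∞) f) (ε t : ℝ) :
    HasDerivAt (fun e => f (e, t)) (De f (ε, t)) ε := by
  have h1 : HasDerivAt (fun e : ℝ => ((e, t) : ℝ × ℝ)) ((1 : ℝ), (0 : ℝ)) ε :=
    (hasDerivAt_id ε).prodMk (hasDerivAt_const ε t)
  exact ((hf.differentiable (by simp) (ε, t)).hasFDerivAt).comp_hasDerivAt ε h1

lemma deriv_slice_t {f : ℝ × ℝ → ℝ} (hf : ContDiff ℝ (⊤ : ℕ∞) f) (ε t : ℝ) :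
    deriv (fun s => f (ε, s)) t = Dt f (ε, t) := (hasDerivAt_slice_t hf ε t).deriv

lemma deriv_slice_e {f : ℝ × ℝ → ℝ} (hf : ContDiff ℝ (⊤ : ℕ∞) f) (ε t : ℝ) :
    deriv (fun e => f (e, t)) ε = De f (ε, t) := (hasDerivAt_slice_e hf ε t).deriv

lemma swap_De_Dt {f : ℝ × ℝ → ℝ} (hf : ContDiff ℝ (⊤ : ℕ∞) f) : De (Dt f) = Dt (De f) := by
  funext p
  have hdiff : DifferentiableAt ℝ (fderiv ℝ f) p :=
    ((hf.fderiv_right (m := (⊤ : ℕ∞)) (by simp)).differentiable (by simp)) p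
  have hsym : IsSymmSndFDerivAt ℝ f p := hf.contDiffAt.isSymmSndFDerivAt (by simp; exact WithTop.coe_le_coe.mpr le_top)
  have e1 : De (Dt f) p = fderiv ℝ (fderiv ℝ f) p (1, 0) (0, 1) := by
    show fderiv ℝ (fun q => fderiv ℝ f q (0, 1)) p (1, 0) = _
    rw [fderiv_clm_apply hdiff (differentiableAt_const _)]
    simp
  have e2 : Dt (De f) p = fderiv ℝ (fderiv ℝ f) p (0, 1) (1, 0) := by
    show fderiv ℝ (fun q => fderiv ℝ f q (1, 0)) p (0, 1) = _
    rw [fderiv_clm_apply hdiff (differentiableAt_const _)]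
    simp
  rw [e1, e2, hsym (1, 0) (0, 1)]

lemma contDiff_DtIter {f : ℝ × ℝ → ℝ} (hf : ContDiff ℝ (⊤ : ℕ∞) f) (k : ℕ) :
    ContDiff ℝ (⊤ : ℕ∞) (Dt^[k] f) := by
  induction k with
  | zero => exact hf
  | succ k ih => rw [Function.iterate_succ_apply']; exact contDiff_Dt ih

lemma iteratedDeriv_slice {f : ℝ × ℝ → ℝ} (hf : ContDiff ℝ (⊤ : ℕ∞) f) (k : ℕ) (ε t : ℝ) :
    iteratedDeriv k (fun s => f (ε, s)) t = Dt^[k] f (ε, t) := by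
  induction k generalizing t with
  | zero => simp
  | succ k ih =>
    rw [iteratedDeriv_succ]
    have : iteratedDeriv k (fun s => f (ε, s)) = fun s => Dt^[k] f (ε, s) :=
      funext fun s => ih s
    rw [this, Function.iterate_succ_apply']
    exact deriv_slice_t (contDiff_DtIter hf k) ε t

lemma De_DtIter {f : ℝ × ℝ → ℝ} (hf : ContDiff ℝ (⊤ : ℕ∞) f) (k : ℕ) :
    De (Dt^[k] f) = Dt^[k] (De f) := by
  induction k with
  | zero => rfl
  | succ k ih =>
    rw [Function.iterate_succ_apply', swap_De_Dt (contDiff_DtIter hf k), ih,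
      ← Function.iterate_succ_apply' Dt k (De f)]

/-- The Wronskian-type bilinear expression
`A = w₁w₂‴ − w₂w₁‴ + w₂′w₁″ − w₁′w₂″ + ((n(n−4)+8)/2)(w₂w₁′ − w₁w₂′)`. -/
noncomputable def wronskianExpr (n : ℕ) (w₁ w₂ : ℝ → ℝ) (t : ℝ) : ℝ :=
  w₁ t * iteratedDeriv 3 w₂ t - w₂ t * iteratedDeriv 3 w₁ t
    + deriv w₂ t * iteratedDeriv 2 w₁ t - deriv w₁ t * iteratedDeriv 2 w₂ t
    + (((n : ℝ) * ((n : ℝ) - 4) + 8) / 2) * (w₂ t * deriv w₁ t - w₁ t * deriv w₂ t)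

theorem wronskian_eq_neg_deriv_hamiltonian (n : ℕ) (hn : 5 ≤ n)
    (I : Set ℝ) (hIsub : I ⊆ Set.Ioi (0 : ℝ)) (hI : IsOpen I)
    (V : ℝ × ℝ → ℝ) (hV : ContDiff ℝ (⊤ : ℕ∞) V)
    (hpos : ∀ ε ∈ I, ∀ t : ℝ, 0 < V (ε, t))
    (hode : ∀ ε ∈ I, DelaunayODE n (fun t => V (ε, t)))
    (h0 : ∀ ε ∈ I, V (ε, 0) = ε)
    (h1 : ∀ ε ∈ I, deriv (fun s => V (ε, s)) 0 = 0)
    (h3 : ∀ ε ∈ I, iteratedDeriv 3 (fun s => V (ε, s)) 0 = 0)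
    (H : ℝ → ℝ)
    (hH : ∀ ε : ℝ, H ε =
      (1 / 2) * (iteratedDeriv 2 (fun s => V (ε, s)) 0) ^ 2
        - ((n : ℝ) ^ 2 * ((n : ℝ) - 4) ^ 2 / 32) * ε ^ 2
        + (((n : ℝ) - 4) ^ 2 * ((n : ℝ) ^ 2 - 4) / 32)
            * ε ^ ((2 * (n : ℝ)) / ((n : ℝ) - 4)))
    (ε : ℝ) (hε : ε ∈ I) :
    wronskianExpr n (fun t => deriv (fun s => V (ε, s)) t)
        (fun t => deriv (fun e => V (e, t)) ε) 0
      = -(deriv H ε) := by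
  have hn4 : (n : ℝ) - 4 ≠ 0 := by
    have : (5 : ℝ) ≤ (n : ℝ) := by exact_mod_cast hn
    linarith
  have hεne : ε ≠ 0 := ne_of_gt (hIsub hε)
  have hnhds : I ∈ nhds ε := hI.mem_nhds hε
  set v : ℝ → ℝ := fun s => V (ε, s) with hv
  set gε : ℝ := iteratedDeriv 2 v 0 with hgε
  -- w₂ facts
  have hw2 : (fun t => deriv (fun e => V (e, t)) ε) = fun t => De V (ε, t) :=
    funext fun t => deriv_slice_e hV ε t
  have b2 : ∀ j : ℕ, iteratedDeriv j (fun t => deriv (fun e => V (e, t)) ε) 0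
      = deriv (fun e => iteratedDeriv j (fun s => V (e, s)) 0) ε := by
    intro j
    rw [hw2, iteratedDeriv_slice (contDiff_De hV) j ε 0, ← De_DtIter hV j,
      ← deriv_slice_e (contDiff_DtIter hV j) ε 0]
    congr 1
    funext e
    rw [iteratedDeriv_slice hV j e 0]
  have b20 : (fun t => deriv (fun e => V (e, t)) ε) 0 = 1 := by
    show deriv (fun e => V (e, 0)) ε = 1
    have heq : (fun e => V (e, 0)) =ᶠ[nhds ε] id := by
      filter_upwards [hnhds] with e he using h0 e he
    rw [heq.deriv_eq, deriv_id]
  have b21 : deriv (fun t => deriv (fun e => V (e, t)) ε) 0 = 0 := by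
    have := b2 1
    rw [iteratedDeriv_one] at this
    rw [this]
    have heq : (fun e => iteratedDeriv 1 (fun s => V (e, s)) 0) =ᶠ[nhds ε] fun _ => 0 := by
      filter_upwards [hnhds] with e he
      rw [iteratedDeriv_one]
      exact h1 e he
    rw [heq.deriv_eq, deriv_const]
  have b23 : iteratedDeriv 3 (fun t => deriv (fun e => V (e, t)) ε) 0 = 0 := by
    rw [b2 3]
    have heq : (fun e => iteratedDeriv 3 (fun s => V (e, s)) 0) =ᶠ[nhds ε] fun _ => 0 := by
      filter_upwards [hnhds] with e he using h3 e he
    rw [heq.deriv_eq, deriv_const]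
  -- the key second-derivative-in-ε quantity
  have hgfun : (fun e => iteratedDeriv 2 (fun s => V (e, s)) 0) = fun e => Dt^[2] V (e, 0) :=
    funext fun e => iteratedDeriv_slice hV 2 e 0
  set D : ℝ := De (Dt^[2] V) (ε, 0) with hD
  have hgd : HasDerivAt (fun e => iteratedDeriv 2 (fun s => V (e, s)) 0) D ε := by
    rw [hgfun]
    exact hasDerivAt_slice_e (contDiff_DtIter hV 2) ε 0
  have b22 : iteratedDeriv 2 (fun t => deriv (fun e => V (e, t)) ε) 0 = D := by
    rw [b2 2, hgd.deriv]
  -- w₁ facts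
  have b10 : (fun t => deriv (fun s => V (ε, s)) t) 0 = 0 := h1 ε hε
  have b11 : deriv (fun t => deriv (fun s => V (ε, s)) t) 0 = gε := by
    rw [hgε, iteratedDeriv_succ, iteratedDeriv_one]
  have b12 : iteratedDeriv 2 (fun t => deriv (fun s => V (ε, s)) t) 0 = 0 := by
    have := h3 ε hε
    rw [iteratedDeriv_succ'] at this
    exact this
  set c : ℝ := ((n : ℝ) * ((n : ℝ) - 4) + 8) / 2 with hc
  set a : ℝ := (n : ℝ) ^ 2 * ((n : ℝ) - 4) ^ 2 / 16 with ha
  set b : ℝ := (n : ℝ) * ((n : ℝ) - 4) * ((n : ℝ) ^ 2 - 4) / 16 with hb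
  have b13 : iteratedDeriv 3 (fun t => deriv (fun s => V (ε, s)) t) 0
      = c * gε - a * ε + b * ε ^ (((n : ℝ) + 4) / ((n : ℝ) - 4)) := by
    have h4 : iteratedDeriv 3 (fun t => deriv (fun s => V (ε, s)) t) 0 = iteratedDeriv 4 v 0 := by
      conv_rhs => rw [show (4 : ℕ) = 3 + 1 from rfl, iteratedDeriv_succ']
    rw [h4, hgε]
    have hode0 : iteratedDeriv 4 v 0 - c * iteratedDeriv 2 v 0 + a * V (ε, 0)
        - b * (V (ε, 0)) ^ (((n : ℝ) + 4) / ((n : ℝ) - 4)) = 0 := hode ε hε 0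
    rw [h0 ε hε] at hode0
    linarith
  -- derivative of H
  set q : ℝ := (2 * (n : ℝ)) / ((n : ℝ) - 4) with hq
  have hqp : q - 1 = ((n : ℝ) + 4) / ((n : ℝ) - 4) := by
    rw [hq]
    field_simp
    ring
  have hHeq : H = fun e => (1 / 2) * (iteratedDeriv 2 (fun s => V (e, s)) 0) ^ 2
      - ((n : ℝ) ^ 2 * ((n : ℝ) - 4) ^ 2 / 32) * e ^ 2
      + (((n : ℝ) - 4) ^ 2 * ((n : ℝ) ^ 2 - 4) / 32) * e ^ q := funext hH
  have hdH : HasDerivAt H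
      ((1 / 2) * ((2 : ℕ) * (iteratedDeriv 2 (fun s => V (ε, s)) 0) ^ 1 * D)
        - ((n : ℝ) ^ 2 * ((n : ℝ) - 4) ^ 2 / 32) * ((2 : ℕ) * ε ^ 1)
        + (((n : ℝ) - 4) ^ 2 * ((n : ℝ) ^ 2 - 4) / 32) * (q * ε ^ (q - 1))) ε := by
    rw [hHeq]
    exact (((hgd.pow 2).const_mul (1 / 2 : ℝ)).sub
      ((hasDerivAt_pow 2 ε).const_mul _)).add
      ((Real.hasDerivAt_rpow_const (Or.inl hεne)).const_mul _)
  have hderivH : deriv H ε = gε * D - a * ε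
      + b * ε ^ (((n : ℝ) + 4) / ((n : ℝ) - 4)) := by
    rw [hdH.deriv, hqp, hgε, hv]
    push_cast
    rw [ha, hb, hq]
    field_simp
    ring
  simp only [wronskianExpr, hv, b10, b20, b21, b23, b11, b12, b13, b22, hderivH]
  ring
end

section
/- Let n ≥ 5 be an integer and let v : ℝ → ℝ be a four-times continuously differentiable positive function. Define u : ℝⁿ∖{0} → ℝ by u(x) = ‖x‖^((4−n)/2)·v(−log‖x‖). Then for every x ≠ 0, Δ(Δu)(x) = ‖x‖^(−(n+4)/2)·( v⁗ − ((n(n−4)+8)/2)·v″ + (n²(n−4)²/16)·v )(−log‖x‖). Consequently, u satisfies Δ(Δu)(x) = (n(n−4)(n²−4)/16)·u(x)^((n+4)/(n−4)) on ℝⁿ∖{0} if and only if v solves the Delaunay ODE. -/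
open Real

/-- The Euclidean Laplacian: the sum of the second partial derivatives with respect
to the standard orthonormal coordinates of `EuclideanSpace ℝ (Fin n)`. -/
noncomputable def lap {n : ℕ} (u : EuclideanSpace ℝ (Fin n) → ℝ)
    (x : EuclideanSpace ℝ (Fin n)) : ℝ :=
  ∑ i : Fin n,
    fderiv ℝ (fun y => fderiv ℝ u y (EuclideanSpace.single i 1)) x
      (EuclideanSpace.single i 1)

open Filter

lemma lap_congr {n : ℕ} {f g : EuclideanSpace ℝ (Fin n) → ℝ}
    {x : EuclideanSpace ℝ (Fin n)} (h : f =ᶠ[nhds x] g) : lap f x = lap g x := by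
  unfold lap
  refine Finset.sum_congr rfl fun i _ => ?_
  have h1 : (fun y => fderiv ℝ f y (EuclideanSpace.single i 1))
      =ᶠ[nhds x] (fun y => fderiv ℝ g y (EuclideanSpace.single i 1)) :=
    (h.fderiv (𝕜 := ℝ)).mono fun y hy => by simp only [hy]
  rw [h1.fderiv_eq]

lemma norm_sq_eq_sum {n : ℕ} (x : EuclideanSpace ℝ (Fin n)) :
    ‖x‖ ^ 2 = ∑ i, x i ^ 2 := by
  rw [EuclideanSpace.norm_eq, Real.sq_sqrt (by positivity)]
  simp [sq_abs]

lemma lap_sq_comp {n : ℕ} (G G' G'' : ℝ → ℝ)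
    (h1 : ∀ s : ℝ, 0 < s → HasDerivAt G (G' s) s)
    (h2 : ∀ s : ℝ, 0 < s → HasDerivAt G' (G'' s) s)
    (x : EuclideanSpace ℝ (Fin n)) (hx : x ≠ 0) :
    lap (fun y => G (‖y‖ ^ 2)) x
      = 4 * ‖x‖ ^ 2 * G'' (‖x‖ ^ 2) + 2 * n * G' (‖x‖ ^ 2) := by
  have hxs : ∀ y : EuclideanSpace ℝ (Fin n), y ≠ 0 → (0:ℝ) < ‖y‖ ^ 2 := by
    intro y hy
    have := norm_pos_iff.mpr hy
    positivity
  have hd : ∀ y : EuclideanSpace ℝ (Fin n), y ≠ 0 →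
      HasFDerivAt (fun y : EuclideanSpace ℝ (Fin n) => G (‖y‖ ^ 2))
        ((G' (‖y‖ ^ 2)) • (2 • (innerSL ℝ y))) y := by
    intro y hy
    exact (h1 _ (hxs y hy)).comp_hasFDerivAt y (hasStrictFDerivAt_norm_sq y).hasFDerivAt
  have hval : ∀ (y : EuclideanSpace ℝ (Fin n)) (i : Fin n),
      ((G' (‖y‖ ^ 2)) • (2 • (innerSL ℝ y))) (EuclideanSpace.single i 1)
        = G' (‖y‖ ^ 2) * (2 * y i) := by
    intro y i
    simp [EuclideanSpace.inner_single_right]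
  have step : ∀ i : Fin n,
      fderiv ℝ (fun y => fderiv ℝ (fun y : EuclideanSpace ℝ (Fin n) => G (‖y‖ ^ 2)) y
          (EuclideanSpace.single i 1)) x (EuclideanSpace.single i 1)
        = 4 * G'' (‖x‖ ^ 2) * (x i) ^ 2 + 2 * G' (‖x‖ ^ 2) := by
    intro i
    have hev : (fun y => fderiv ℝ (fun y : EuclideanSpace ℝ (Fin n) => G (‖y‖ ^ 2)) y
          (EuclideanSpace.single i 1))
        =ᶠ[nhds x] (fun y => G' (‖y‖ ^ 2) * (2 * y i)) := by
      filter_upwards [IsOpen.mem_nhds isOpen_compl_singleton hx] with y hy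
      rw [(hd y hy).fderiv, hval]
    have hc : HasFDerivAt (fun y : EuclideanSpace ℝ (Fin n) => G' (‖y‖ ^ 2))
        ((G'' (‖x‖ ^ 2)) • (2 • (innerSL ℝ x))) x :=
      (h2 _ (hxs x hx)).comp_hasFDerivAt x (hasStrictFDerivAt_norm_sq x).hasFDerivAt
    have hdd : HasFDerivAt (fun y : EuclideanSpace ℝ (Fin n) => (2:ℝ) * y i)
        ((2:ℝ) • (EuclideanSpace.proj i : EuclideanSpace ℝ (Fin n) →L[ℝ] ℝ)) x :=
      ((EuclideanSpace.proj i : EuclideanSpace ℝ (Fin n) →L[ℝ] ℝ).hasFDerivAt (x := x)).const_mul (2:ℝ)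
    have key : HasFDerivAt (fun y : EuclideanSpace ℝ (Fin n) => G' (‖y‖ ^ 2) * ((2:ℝ) * y i)) _ x :=
      hc.mul' hdd
    rw [hev.fderiv_eq, key.fderiv]
    simp [EuclideanSpace.inner_single_right, EuclideanSpace.single_apply]
    ring
  unfold lap
  simp only [step]
  rw [Finset.sum_add_distrib, Finset.sum_const, ← Finset.mul_sum, ← norm_sq_eq_sum]
  simp [Finset.card_univ]
  ring

lemma hasDerivAt_phi (β : ℝ) (w w1 : ℝ → ℝ) (hw : ∀ t, HasDerivAt w (w1 t) t)
    {s : ℝ} (hs : 0 < s) :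
    HasDerivAt (fun s : ℝ => s ^ β * w (-(Real.log s)/2))
      (s ^ (β-1) * (β * w (-(Real.log s)/2) - w1 (-(Real.log s)/2) / 2)) s := by
  have h1 : HasDerivAt (fun s : ℝ => s ^ β) (β * s ^ (β-1)) s :=
    Real.hasDerivAt_rpow_const (Or.inl hs.ne')
  have h2 : HasDerivAt (fun s : ℝ => -(Real.log s)/2) (-(1/s)/2) s := by
    simpa using ((Real.hasDerivAt_log hs.ne').neg.div_const 2)
  have h3 : HasDerivAt (fun s : ℝ => w (-(Real.log s)/2))
      (w1 (-(Real.log s)/2) * (-(1/s)/2)) s := (hw _).comp s h2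
  have h4 : HasDerivAt (fun s : ℝ => s ^ β * w (-(Real.log s)/2)) _ s := h1.mul h3
  convert h4 using 1
  rw [Real.rpow_sub hs, Real.rpow_one]
  field_simp
  ring

lemma lap_EF {n : ℕ} (α : ℝ) (w w1 w2 : ℝ → ℝ)
    (hw : ∀ t, HasDerivAt w (w1 t) t) (hw1 : ∀ t, HasDerivAt w1 (w2 t) t)
    (x : EuclideanSpace ℝ (Fin n)) (hx : x ≠ 0) :
    lap (fun y => ‖y‖ ^ α * w (-Real.log ‖y‖)) x
      = ‖x‖ ^ (α - 2) * (w2 (-Real.log ‖x‖) - (2*α + n - 2) * w1 (-Real.log ‖x‖)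
          + α*(α + n - 2) * w (-Real.log ‖x‖)) := by
  have hr : (0:ℝ) < ‖x‖ := norm_pos_iff.mpr hx
  set G : ℝ → ℝ := fun s => s ^ (α/2) * w (-(Real.log s)/2) with hG
  set G' : ℝ → ℝ := fun s => s ^ (α/2-1)
      * ((α/2) * w (-(Real.log s)/2) - w1 (-(Real.log s)/2) / 2) with hG'
  set G'' : ℝ → ℝ := fun s => s ^ (α/2-1-1)
      * ((α/2-1) * ((α/2) * w (-(Real.log s)/2) - w1 (-(Real.log s)/2) / 2)
        - ((α/2) * w1 (-(Real.log s)/2) - w2 (-(Real.log s)/2) / 2) / 2) with hG''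
  have h1 : ∀ s : ℝ, 0 < s → HasDerivAt G (G' s) s :=
    fun s hs => hasDerivAt_phi (α/2) w w1 hw hs
  have h2 : ∀ s : ℝ, 0 < s → HasDerivAt G' (G'' s) s :=
    fun s hs => hasDerivAt_phi (α/2-1) (fun t => (α/2) * w t - w1 t / 2)
      (fun t => (α/2) * w1 t - w2 t / 2)
      (fun t => ((hw t).const_mul (α/2)).sub ((hw1 t).div_const 2)) hs
  have hfun : (fun y : EuclideanSpace ℝ (Fin n) => ‖y‖ ^ α * w (-Real.log ‖y‖))
      =ᶠ[nhds x] (fun y => G (‖y‖ ^ 2)) := by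
    filter_upwards [IsOpen.mem_nhds isOpen_compl_singleton hx] with y hy
    have h0 : (0:ℝ) < ‖y‖ := norm_pos_iff.mpr hy
    simp only [hG]
    rw [Real.log_pow, ← Real.rpow_natCast ‖y‖ 2, ← Real.rpow_mul (norm_nonneg y)]
    push_cast
    rw [show (2:ℝ) * (α/2) = α by ring, show -(2 * Real.log ‖y‖)/2 = -Real.log ‖y‖ by ring]
  rw [lap_congr hfun, lap_sq_comp G G' G'' h1 h2 x hx]
  have e2 : ∀ β : ℝ, (‖x‖ ^ 2 : ℝ) ^ β = ‖x‖ ^ (2 * β) := by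
    intro β
    rw [← Real.rpow_natCast ‖x‖ 2, ← Real.rpow_mul (norm_nonneg x)]
    norm_num
  have ht : -(Real.log (‖x‖ ^ 2))/2 = -Real.log ‖x‖ := by
    rw [Real.log_pow]; push_cast; ring
  simp only [hG', hG'', e2, ht]
  rw [show (2:ℝ) * (α/2-1) = α - 2 by ring, show (2:ℝ) * (α/2-1-1) = α - 4 by ring]
  have e3 : (‖x‖:ℝ) ^ 2 * ‖x‖ ^ (α-4) = ‖x‖ ^ (α-2) := by
    rw [← Real.rpow_natCast ‖x‖ 2, ← Real.rpow_add hr]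
    congr 1
    push_cast
    ring
  rw [show ∀ A B : ℝ, 4 * ‖x‖^2 * (‖x‖ ^ (α-4) * A) + 2 * (n:ℝ) * (‖x‖ ^ (α-2) * B)
      = (‖x‖^2 * ‖x‖^(α-4)) * (4*A) + ‖x‖ ^ (α-2) * (2*n*B) from fun A B => by ring, e3]
  ring

theorem emden_fowler_bilaplacian (n : ℕ) (hn : 5 ≤ n) (v : ℝ → ℝ)
    (hv : ContDiff ℝ 4 v) (hpos : ∀ t : ℝ, 0 < v t)
    (u : EuclideanSpace ℝ (Fin n) → ℝ)
    (hu : ∀ x : EuclideanSpace ℝ (Fin n),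
      u x = ‖x‖ ^ ((4 - (n : ℝ)) / 2) * v (-Real.log ‖x‖)) :
    (∀ x : EuclideanSpace ℝ (Fin n), x ≠ 0 →
      lap (lap u) x = ‖x‖ ^ (-(((n : ℝ) + 4) / 2))
        * (iteratedDeriv 4 v (-Real.log ‖x‖)
            - (((n : ℝ) * ((n : ℝ) - 4) + 8) / 2) * iteratedDeriv 2 v (-Real.log ‖x‖)
            + ((n : ℝ) ^ 2 * ((n : ℝ) - 4) ^ 2 / 16) * v (-Real.log ‖x‖))) ∧
    ((∀ x : EuclideanSpace ℝ (Fin n), x ≠ 0 →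
        lap (lap u) x = ((n : ℝ) * ((n : ℝ) - 4) * ((n : ℝ) ^ 2 - 4) / 16)
          * (u x) ^ (((n : ℝ) + 4) / ((n : ℝ) - 4)))
      ↔ DelaunayODE n v) := by
  have hn5 : (5:ℝ) ≤ (n:ℝ) := by exact_mod_cast hn
  have hn4 : (n:ℝ) - 4 ≠ 0 := by linarith
  set a : ℝ := (4 - (n:ℝ)) / 2 with ha
  have hD : ∀ k : ℕ, k < 4 → ∀ t : ℝ,
      HasDerivAt (iteratedDeriv k v) (iteratedDeriv (k+1) v t) t := by
    intro k hk t
    rw [iteratedDeriv_succ]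
    exact ((hv.differentiable_iteratedDeriv k (by exact_mod_cast hk)) t).hasDerivAt
  have hv0 : ∀ t : ℝ, HasDerivAt v (iteratedDeriv 1 v t) t := by
    intro t; have := hD 0 (by norm_num) t; rwa [iteratedDeriv_zero] at this
  set C1 : ℝ := 2*a + n - 2 with hC1
  set C0 : ℝ := a * (a + n - 2) with hC0
  set gg : ℝ → ℝ := fun t =>
    iteratedDeriv 2 v t - C1 * iteratedDeriv 1 v t + C0 * v t with hgg
  set gg1 : ℝ → ℝ := fun t =>
    iteratedDeriv 3 v t - C1 * iteratedDeriv 2 v t + C0 * iteratedDeriv 1 v t with hgg1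
  set gg2 : ℝ → ℝ := fun t =>
    iteratedDeriv 4 v t - C1 * iteratedDeriv 3 v t + C0 * iteratedDeriv 2 v t with hgg2
  have hg : ∀ t, HasDerivAt gg (gg1 t) t := fun t =>
    ((hD 2 (by norm_num) t).sub ((hD 1 (by norm_num) t).const_mul C1)).add
      ((hv0 t).const_mul C0)
  have hg' : ∀ t, HasDerivAt gg1 (gg2 t) t := fun t =>
    ((hD 3 (by norm_num) t).sub ((hD 2 (by norm_num) t).const_mul C1)).add
      ((hD 1 (by norm_num) t).const_mul C0)
  have hufun : u = fun y => ‖y‖ ^ a * v (-Real.log ‖y‖) := funext hu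
  have hlap1 : ∀ y : EuclideanSpace ℝ (Fin n), y ≠ 0 →
      lap u y = ‖y‖ ^ (a - 2) * gg (-Real.log ‖y‖) := by
    intro y hy
    rw [hufun, lap_EF a v (iteratedDeriv 1 v) (iteratedDeriv 2 v) hv0
      (hD 1 (by norm_num)) y hy]
  have part1 : ∀ x : EuclideanSpace ℝ (Fin n), x ≠ 0 →
      lap (lap u) x = ‖x‖ ^ (-(((n : ℝ) + 4) / 2))
        * (iteratedDeriv 4 v (-Real.log ‖x‖)
            - (((n : ℝ) * ((n : ℝ) - 4) + 8) / 2) * iteratedDeriv 2 v (-Real.log ‖x‖)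
            + ((n : ℝ) ^ 2 * ((n : ℝ) - 4) ^ 2 / 16) * v (-Real.log ‖x‖)) := by
    intro x hx
    have hev : lap u =ᶠ[nhds x]
        (fun y => ‖y‖ ^ (a-2) * gg (-Real.log ‖y‖)) := by
      filter_upwards [IsOpen.mem_nhds isOpen_compl_singleton hx] with y hy
      exact hlap1 y hy
    rw [lap_congr hev, lap_EF (a-2) gg gg1 gg2 hg hg' x hx]
    rw [show a - 2 - 2 = -(((n:ℝ)+4)/2) by rw [ha]; ring]
    congr 1
    simp only [hgg, hgg1, hgg2, hC1, hC0, ha]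
    ring
  refine ⟨part1, ?_⟩
  have hupow : ∀ x : EuclideanSpace ℝ (Fin n), x ≠ 0 →
      (u x) ^ (((n : ℝ) + 4) / ((n : ℝ) - 4)) = ‖x‖ ^ (-(((n:ℝ)+4)/2))
        * (v (-Real.log ‖x‖)) ^ (((n : ℝ) + 4) / ((n : ℝ) - 4)) := by
    intro x hx
    rw [hu x, Real.mul_rpow (Real.rpow_nonneg (norm_nonneg x) _) (hpos _).le,
      ← Real.rpow_mul (norm_nonneg x),
      show (4 - (n:ℝ))/2 * (((n : ℝ) + 4) / ((n : ℝ) - 4)) = -(((n:ℝ)+4)/2) by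
        field_simp; ring]
  constructor
  · intro h t
    set x0 : EuclideanSpace ℝ (Fin n) :=
      EuclideanSpace.single (⟨0, by omega⟩ : Fin n) (Real.exp (-t)) with hx0
    have hnorm : ‖x0‖ = Real.exp (-t) := by
      rw [hx0, EuclideanSpace.norm_single, Real.norm_eq_abs, abs_of_pos (exp_pos _)]
    have hne : x0 ≠ 0 := by
      intro hc
      have : ‖x0‖ = 0 := by rw [hc, norm_zero]
      rw [hnorm] at this
      exact (exp_pos (-t)).ne' this
    have hlog : -Real.log ‖x0‖ = t := by rw [hnorm, Real.log_exp]; ring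
    have h2 := h x0 hne
    rw [part1 x0 hne, hupow x0 hne, hlog] at h2
    have hγ : (0:ℝ) < ‖x0‖ ^ (-(((n:ℝ)+4)/2)) :=
      Real.rpow_pos_of_pos (by rw [hnorm]; exact exp_pos _) _
    rw [show ((n : ℝ) * ((n : ℝ) - 4) * ((n : ℝ) ^ 2 - 4) / 16)
        * (‖x0‖ ^ (-(((n:ℝ)+4)/2)) * (v t) ^ (((n : ℝ) + 4) / ((n : ℝ) - 4)))
        = ‖x0‖ ^ (-(((n:ℝ)+4)/2)) * (((n : ℝ) * ((n : ℝ) - 4) * ((n : ℝ) ^ 2 - 4) / 16)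
          * (v t) ^ (((n : ℝ) + 4) / ((n : ℝ) - 4))) by ring] at h2
    have h3 := mul_left_cancel₀ hγ.ne' h2
    linarith [h3]
  · intro hode x hx
    rw [part1 x hx, hupow x hx]
    have h3 := hode (-Real.log ‖x‖)
    have hE : iteratedDeriv 4 v (-Real.log ‖x‖)
        - (((n : ℝ) * ((n : ℝ) - 4) + 8) / 2) * iteratedDeriv 2 v (-Real.log ‖x‖)
        + ((n : ℝ) ^ 2 * ((n : ℝ) - 4) ^ 2 / 16) * v (-Real.log ‖x‖)
        = ((n : ℝ) * ((n : ℝ) - 4) * ((n : ℝ) ^ 2 - 4) / 16)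
          * (v (-Real.log ‖x‖)) ^ (((n : ℝ) + 4) / ((n : ℝ) - 4)) := by linarith [h3]
    rw [hE]
    ring
end

section
/- Let n ≥ 5 be an integer and let v : ℝ → ℝ be a three-times continuously differentiable function. Define u : ℝⁿ∖{0} → ℝ by u(x) = ‖x‖^((4−n)/2)·v(−log‖x‖). Then for every unit vector θ ∈ ℝⁿ and every r > 0, the radial derivative of the Laplacian of u satisfies d/dr [ (Δu)(r·θ) ] = −r^(−(n+2)/2)·( v‴ + ((n−4)/2)·v″ − (n²/4)·v′ − (n²(n−4)/8)·v )(−log r). -/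
open Real

private lemma ef_step (V W : ℝ → ℝ) (hV : ∀ s, HasDerivAt V (W s) s) (c : ℝ) {t : ℝ}
    (ht : 0 < t) :
    HasDerivAt (fun t : ℝ => t ^ c * V (-Real.log t / 2))
      (t ^ (c - 1) * (c * V (-Real.log t / 2) - W (-Real.log t / 2) / 2)) t := by
  have h1 : HasDerivAt (fun t : ℝ => t ^ c) (c * t ^ (c - 1)) t :=
    Real.hasDerivAt_rpow_const (Or.inl ht.ne')
  have h2 : HasDerivAt (fun t : ℝ => -Real.log t / 2) (-(t⁻¹) / 2) t :=
    ((Real.hasDerivAt_log ht.ne').neg).div_const 2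
  have h3 : HasDerivAt (fun t : ℝ => V (-Real.log t / 2))
      (W (-Real.log t / 2) * (-(t⁻¹) / 2)) t := (hV _).comp t h2
  have := h1.mul h3
  refine this.congr_deriv ?_
  rw [Real.rpow_sub_one ht.ne']
  field_simp
  ring

private noncomputable def qd {n : ℕ} (x : EuclideanSpace ℝ (Fin n)) :
    EuclideanSpace ℝ (Fin n) →L[ℝ] ℝ :=
  (fderivInnerCLM ℝ (x, x)).comp
    ((ContinuousLinearMap.id ℝ (EuclideanSpace ℝ (Fin n))).prod
      (ContinuousLinearMap.id ℝ (EuclideanSpace ℝ (Fin n))))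

private lemma hasFDerivAt_qd {n : ℕ} (x : EuclideanSpace ℝ (Fin n)) :
    HasFDerivAt (fun y : EuclideanSpace ℝ (Fin n) => (inner ℝ y y : ℝ)) (qd x) x :=
  (hasFDerivAt_id x).inner ℝ (hasFDerivAt_id x)

private lemma qd_single {n : ℕ} (x : EuclideanSpace ℝ (Fin n)) (i : Fin n) :
    qd x (EuclideanSpace.single i 1) = 2 * x i := by
  simp [qd, fderivInnerCLM_apply, EuclideanSpace.inner_single_right,
    EuclideanSpace.inner_single_left]
  ring

private lemma hasFDerivAt_coord {n : ℕ} (x : EuclideanSpace ℝ (Fin n)) (i : Fin n) :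
    HasFDerivAt (fun y : EuclideanSpace ℝ (Fin n) => y i)
      (EuclideanSpace.proj i : EuclideanSpace ℝ (Fin n) →L[ℝ] ℝ) x := by
  have := (EuclideanSpace.proj (𝕜 := ℝ) i).hasFDerivAt (x := x)
  convert this using 2
  rfl

theorem emden_fowler_radial_deriv_laplacian (n : ℕ) (hn : 5 ≤ n)
    (v : ℝ → ℝ) (hv : ContDiff ℝ 3 v)
    (u : EuclideanSpace ℝ (Fin n) → ℝ)
    (hu : ∀ x : EuclideanSpace ℝ (Fin n),
      u x = ‖x‖ ^ ((4 - (n : ℝ)) / 2) * v (-Real.log ‖x‖)) :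
    ∀ θ : EuclideanSpace ℝ (Fin n), ‖θ‖ = 1 → ∀ r : ℝ, 0 < r →
      deriv (fun s : ℝ => lap u (s • θ)) r
        = -(r ^ (-(((n : ℝ) + 2) / 2)))
            * (iteratedDeriv 3 v (-Real.log r)
                + (((n : ℝ) - 4) / 2) * iteratedDeriv 2 v (-Real.log r)
                - ((n : ℝ) ^ 2 / 4) * deriv v (-Real.log r)
                - ((n : ℝ) ^ 2 * ((n : ℝ) - 4) / 8) * v (-Real.log r)) := by
  intro θ hθ r hr
  rw [show iteratedDeriv 3 v = deriv (deriv (deriv v)) by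
        rw [show (3:ℕ) = 2 + 1 from rfl, iteratedDeriv_succ,
          show (2:ℕ) = 1 + 1 from rfl, iteratedDeriv_succ, iteratedDeriv_one],
      show iteratedDeriv 2 v = deriv (deriv v) by
        rw [show (2:ℕ) = 1 + 1 from rfl, iteratedDeriv_succ, iteratedDeriv_one]]
  -- differentiability of v and its derivatives
  have hDv : Differentiable ℝ v := hv.differentiable (by norm_num)
  have hv2 : ContDiff ℝ 2 (deriv v) :=
    ((contDiff_succ_iff_deriv (n := 2)).mp (by exact_mod_cast hv)).2.2
  have hv1 : ContDiff ℝ 1 (deriv (deriv v)) :=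
    ((contDiff_succ_iff_deriv (n := 1)).mp (by exact_mod_cast hv2)).2.2
  have hDv1 : Differentiable ℝ (deriv v) := hv2.differentiable (by norm_num)
  have hDv2 : Differentiable ℝ (deriv (deriv v)) := hv1.differentiable (by norm_num)
  set V1 := deriv v with hV1
  set V2 := deriv V1 with hV2
  set V3 := deriv V2 with hV3
  have hd0 : ∀ s, HasDerivAt v (V1 s) s := fun s => (hDv s).hasDerivAt
  have hd1 : ∀ s, HasDerivAt V1 (V2 s) s := fun s => (hDv1 s).hasDerivAt
  have hd2 : ∀ s, HasDerivAt V2 (V3 s) s := fun s => (hDv2 s).hasDerivAt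
  set b : ℝ := (4 - (n : ℝ)) / 4 with hb
  set P1 : ℝ → ℝ := fun s => b * v s - V1 s / 2 with hP1
  set Q1 : ℝ → ℝ := fun s => b * V1 s - V2 s / 2 with hQ1
  set Q2 : ℝ → ℝ := fun s => b * V2 s - V3 s / 2 with hQ2
  set P2 : ℝ → ℝ := fun s => (b - 1) * P1 s - Q1 s / 2 with hP2
  set P2' : ℝ → ℝ := fun s => (b - 1) * Q1 s - Q2 s / 2 with hP2'
  set P3 : ℝ → ℝ := fun s => (b - 1 - 1) * P2 s - P2' s / 2 with hP3
  have hdP1 : ∀ s, HasDerivAt P1 (Q1 s) s :=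
    fun s => ((hd0 s).const_mul b).sub ((hd1 s).div_const 2)
  have hdQ1 : ∀ s, HasDerivAt Q1 (Q2 s) s :=
    fun s => ((hd1 s).const_mul b).sub ((hd2 s).div_const 2)
  have hdP2 : ∀ s, HasDerivAt P2 (P2' s) s :=
    fun s => ((hdP1 s).const_mul (b - 1)).sub ((hdQ1 s).div_const 2)
  -- radial profile functions and their derivatives
  have hg0d : ∀ t : ℝ, 0 < t → HasDerivAt (fun t : ℝ => t ^ b * v (-Real.log t / 2))
      (t ^ (b - 1) * P1 (-Real.log t / 2)) t := fun t ht => ef_step v V1 hd0 b ht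
  have hg1d : ∀ t : ℝ, 0 < t →
      HasDerivAt (fun t : ℝ => t ^ (b - 1) * P1 (-Real.log t / 2))
      (t ^ (b - 1 - 1) * P2 (-Real.log t / 2)) t := fun t ht => ef_step P1 Q1 hdP1 (b - 1) ht
  have hg2d : ∀ t : ℝ, 0 < t →
      HasDerivAt (fun t : ℝ => t ^ (b - 1 - 1) * P2 (-Real.log t / 2))
      (t ^ (b - 1 - 1 - 1) * P3 (-Real.log t / 2)) t :=
    fun t ht => ef_step P2 P2' hdP2 (b - 1 - 1) ht
  have hqpos : ∀ x : EuclideanSpace ℝ (Fin n), x ≠ 0 → (0 : ℝ) < inner ℝ x x := by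
    intro x hx
    rw [real_inner_self_eq_norm_sq]
    have : ‖x‖ ≠ 0 := norm_ne_zero_iff.mpr hx
    positivity
  -- u in terms of inner ℝ x x
  have hu0 : ∀ x : EuclideanSpace ℝ (Fin n), x ≠ 0 →
      u x = (inner ℝ x x : ℝ) ^ b * v (-Real.log (inner ℝ x x : ℝ) / 2) := by
    intro x hx
    have hxn : (0:ℝ) < ‖x‖ := norm_pos_iff.mpr hx
    rw [hu x, real_inner_self_eq_norm_sq]
    congr 1
    · rw [← Real.rpow_natCast ‖x‖ 2, ← Real.rpow_mul (norm_nonneg x)]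
      congr 1
      push_cast [hb]
      ring
    · congr 1
      rw [Real.log_pow]
      push_cast
      ring
  -- first derivative of u
  have hU : ∀ x : EuclideanSpace ℝ (Fin n), x ≠ 0 →
      HasFDerivAt u (((inner ℝ x x : ℝ) ^ (b - 1) * P1 (-Real.log (inner ℝ x x : ℝ) / 2)) • qd x) x := by
    intro x hx
    have hcomp := (hg0d _ (hqpos x hx)).comp_hasFDerivAt
      (f := fun y : EuclideanSpace ℝ (Fin n) => (inner ℝ y y : ℝ)) x (hasFDerivAt_qd x)
    apply hcomp.congr_of_eventuallyEq
    filter_upwards [isOpen_compl_singleton.mem_nhds hx] with y hy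
    exact hu0 y hy
  have hfd : ∀ x : EuclideanSpace ℝ (Fin n), x ≠ 0 → ∀ i : Fin n,
      fderiv ℝ u x (EuclideanSpace.single i 1)
        = 2 * ((inner ℝ x x : ℝ) ^ (b - 1) * P1 (-Real.log (inner ℝ x x : ℝ) / 2) * x i) := by
    intro x hx i
    rw [(hU x hx).fderiv]
    simp [qd_single]
    ring
  -- second derivatives
  have hsecond : ∀ x : EuclideanSpace ℝ (Fin n), x ≠ 0 → ∀ i : Fin n,
      fderiv ℝ (fun y => fderiv ℝ u y (EuclideanSpace.single i 1)) x (EuclideanSpace.single i 1)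
        = 2 * ((inner ℝ x x : ℝ) ^ (b - 1) * P1 (-Real.log (inner ℝ x x : ℝ) / 2))
          + 4 * ((inner ℝ x x : ℝ) ^ (b - 1 - 1) * P2 (-Real.log (inner ℝ x x : ℝ) / 2)) * (x i * x i) := by
    intro x hx i
    have hpos := hqpos x hx
    have hg1c : HasFDerivAt
        (fun y : EuclideanSpace ℝ (Fin n) =>
          (inner ℝ y y : ℝ) ^ (b - 1) * P1 (-Real.log (inner ℝ y y : ℝ) / 2))
        (((inner ℝ x x : ℝ) ^ (b - 1 - 1) * P2 (-Real.log (inner ℝ x x : ℝ) / 2)) • qd x) x :=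
      (hg1d _ hpos).comp_hasFDerivAt
        (f := fun y : EuclideanSpace ℝ (Fin n) => (inner ℝ y y : ℝ)) x (hasFDerivAt_qd x)
    have hmul := (hg1c.mul (hasFDerivAt_coord x i)).const_mul (2 : ℝ)
    have hev : (fun y => fderiv ℝ u y (EuclideanSpace.single i 1)) =ᶠ[nhds x]
        (fun y : EuclideanSpace ℝ (Fin n) =>
          2 * (((inner ℝ y y : ℝ) ^ (b - 1) * P1 (-Real.log (inner ℝ y y : ℝ) / 2)) * y i)) := by
      filter_upwards [isOpen_compl_singleton.mem_nhds hx] with y hy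
      rw [hfd y hy i]
    rw [hev.fderiv_eq, HasFDerivAt.fderiv (f := fun y : EuclideanSpace ℝ (Fin n) =>
        2 * (((inner ℝ y y : ℝ) ^ (b - 1) * P1 (-Real.log (inner ℝ y y : ℝ) / 2)) * y i)) hmul]
    simp [qd_single, PiLp.proj_apply, EuclideanSpace.single_apply]
    ring
  -- the Laplacian of u
  have hlap : ∀ x : EuclideanSpace ℝ (Fin n), x ≠ 0 →
      lap u x = 2 * (n : ℝ) * ((inner ℝ x x : ℝ) ^ (b - 1) * P1 (-Real.log (inner ℝ x x : ℝ) / 2))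
        + 4 * ((inner ℝ x x : ℝ) * ((inner ℝ x x : ℝ) ^ (b - 1 - 1) * P2 (-Real.log (inner ℝ x x : ℝ) / 2))) := by
    intro x hx
    unfold lap
    rw [Finset.sum_congr rfl (fun i _ => hsecond x hx i)]
    rw [Finset.sum_add_distrib, Finset.sum_const, ← Finset.mul_sum]
    have hs : ∑ i : Fin n, x i * x i = (inner ℝ x x : ℝ) := by
      simp [PiLp.inner_apply, RCLike.inner_apply]
      rw [EuclideanSpace.real_norm_sq_eq]
      simp [sq]
    rw [hs]
    simp
    ring
  -- restrict to the ray
  have hθ0 : θ ≠ 0 := by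
    intro h
    rw [h] at hθ
    simp at hθ
  have hray : ∀ s : ℝ, s ∈ Set.Ioi (0:ℝ) →
      lap u (s • θ) = 2 * (n : ℝ) * ((s ^ 2 : ℝ) ^ (b - 1) * P1 (-Real.log (s ^ 2 : ℝ) / 2))
        + 4 * ((s ^ 2) * ((s ^ 2 : ℝ) ^ (b - 1 - 1) * P2 (-Real.log (s ^ 2 : ℝ) / 2))) := by
    intro s hs
    have hs0 : (0:ℝ) < s := hs
    have hne : s • θ ≠ 0 := smul_ne_zero hs0.ne' hθ0
    have hinner : (inner ℝ (s • θ) (s • θ) : ℝ) = s ^ 2 := by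
      rw [real_inner_smul_left, real_inner_smul_right, real_inner_self_eq_norm_sq, hθ]
      ring
    rw [hlap _ hne, hinner]
  have hev : (fun s : ℝ => lap u (s • θ)) =ᶠ[nhds r]
      (fun s : ℝ => 2 * (n : ℝ) * ((s ^ 2 : ℝ) ^ (b - 1) * P1 (-Real.log (s ^ 2 : ℝ) / 2))
        + 4 * ((s ^ 2) * ((s ^ 2 : ℝ) ^ (b - 1 - 1) * P2 (-Real.log (s ^ 2 : ℝ) / 2)))) := by
    filter_upwards [isOpen_Ioi.mem_nhds hr] with s hs
    exact hray s hs
  rw [hev.deriv_eq]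
  have hr2 : (0:ℝ) < r ^ 2 := by positivity
  have hs2 : HasDerivAt (fun s : ℝ => s ^ 2) (2 * r) r := by
    simpa using hasDerivAt_pow 2 r
  have h1 : HasDerivAt
      (fun s : ℝ => 2 * (n : ℝ) * ((s ^ 2 : ℝ) ^ (b - 1) * P1 (-Real.log (s ^ 2 : ℝ) / 2)))
      (2 * (n : ℝ) * ((r ^ 2 : ℝ) ^ (b - 1 - 1) * P2 (-Real.log (r ^ 2 : ℝ) / 2) * (2 * r))) r :=
    (((hg1d _ hr2).comp (h := fun s : ℝ => s ^ 2) r hs2).const_mul _)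
  have h2 : HasDerivAt
      (fun s : ℝ => 4 * ((s ^ 2) * ((s ^ 2 : ℝ) ^ (b - 1 - 1) * P2 (-Real.log (s ^ 2 : ℝ) / 2))))
      (4 * ((2 * r) * ((r ^ 2 : ℝ) ^ (b - 1 - 1) * P2 (-Real.log (r ^ 2 : ℝ) / 2))
        + r ^ 2 * ((r ^ 2 : ℝ) ^ (b - 1 - 1 - 1) * P3 (-Real.log (r ^ 2 : ℝ) / 2) * (2 * r)))) r :=
    ((hs2.mul ((hg2d _ hr2).comp (h := fun s : ℝ => s ^ 2) r hs2)).const_mul 4)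
  refine ((h1.add h2).deriv).trans ?_
  -- final algebra
  have hm : -Real.log (r ^ 2) / 2 = -Real.log r := by
    rw [Real.log_pow]
    push_cast
    ring
  have e1 : ((r : ℝ) ^ 2) ^ (b - 1 - 1) = r ^ (-(((n : ℝ) + 2) / 2)) / r := by
    rw [← Real.rpow_natCast r 2, ← Real.rpow_mul hr.le, eq_div_iff hr.ne',
      ← Real.rpow_add_one hr.ne']
    congr 1
    push_cast [hb]
    ring
  have e2 : ((r : ℝ) ^ 2) ^ (b - 1 - 1 - 1) = r ^ (-(((n : ℝ) + 2) / 2)) / r ^ 3 := by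
    rw [← Real.rpow_natCast r 2, ← Real.rpow_mul hr.le, eq_div_iff (by positivity : (r:ℝ)^3 ≠ 0),
      ← Real.rpow_natCast r 3, ← Real.rpow_add hr]
    congr 1
    push_cast [hb]
    ring
  rw [hm, e1, e2]
  simp only [hP3, hP2', hP2, hQ1, hQ2, hP1, hb]
  field_simp
  ring
end
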